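/- Let x_1,…,x_m be i.i.d. random vectors in ℝ^n on a probability space, with mean zero, positive definite covariance matrix C = E[x x^T], and E[‖x‖₂⁴] < ∞. Let Ĉ = (1/m) Σ_{p=1}^m x_p x_p^T, let u_1,…,u_n be an orthonormal basis of eigenvectors of C with eigenvalues λ_1 ≥ … ≥ λ_n > 0, and let ω ↦ (û_1(ω),…,û_n(ω)) be a measurable choice of an orthonormal basis of eigenvectors of Ĉ(ω) with eigenvalues λ̂_1(ω) ≥ … ≥ λ̂_n(ω). Fix an index i, an integer ℓ ≥ 0, set S = { j ∈ {1,…,n} : |j − i| > ℓ }, assume λ_j ≠ λ_i for every j ∈ S, set k_j = (E[‖x x^T u_j‖₂²] − λ_j²)^{1/2}, and let E be the event that sign(λ_i − λ_j)·2λ̂_i > sign(λ_i − λ_j)·(λ_i + λ_j) for every j ∈ S. Then for every t ∈ (0,1), P( E ∩ { Σ_{j: |j−i| ≤ ℓ} ⟨û_i, u_j⟩² < 1 − t } ) ≤ Σ_{j ∈ S} 4 k_j² / (m·t·(λ_i − λ_j)²). -/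

import Mathlib

/-!
If `v` is a unit eigenvector of the symmetric matrix `Ĉ` with eigenvalue `λ̂` and
`C u_j = λ_j u_j`, then `(λ̂ - λ_j) ⟨v, u_j⟩ = ⟨v, (Ĉ - C) u_j⟩`, so by Cauchy–Schwarz
`(λ̂ - λ_j)² ⟨v, u_j⟩² ≤ ‖(Ĉ - C) u_j‖²`; on the event `E` the sign condition says
`|λ̂_i - λ_j| > |λ_i - λ_j| / 2`. By Parseval, if `û_i` has mass `< 1 - t` on the indices near
`i`, it has mass `> t` on `S`, so the event forces
`Z = Σ_{j ∈ S} 4 ‖(Ĉ - C) u_j‖² / (λ_i - λ_j)² ≥ t`. Finally `(Ĉ - C) u_j` is the centred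
sample mean of the i.i.d. vectors `x_p x_pᵀ u_j`, whose mean-square error is `k_j² / m`, and
Markov's inequality applied to `Z` gives the bound.
-/

open Matrix Finset MeasureTheory ProbabilityTheory

section SampleMean

variable {Ω ι : Type*} [MeasurableSpace Ω] {μ : Measure Ω} [Fintype ι]

lemma variance_sampleMean {Y : ι → Ω → ℝ} {Y₀ : Ω → ℝ} (hY : ∀ p, MemLp (Y p) 2 μ)
    (hindep : Pairwise fun p q => IndepFun (Y p) (Y q) μ)
    (hident : ∀ p, IdentDistrib (Y p) Y₀ μ μ) :
    Var[fun ω => (Fintype.card ι : ℝ)⁻¹ * ∑ p, Y p ω; μ]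
      = Var[Y₀; μ] / Fintype.card ι := by
  have hsum : Var[fun ω => ∑ p, Y p ω; μ] = Fintype.card ι * Var[Y₀; μ] := by
    rw [← Finset.sum_fn, IndepFun.variance_sum (fun p _ => hY p)
      (fun p _ q _ hpq => hindep hpq)]
    simp [fun p => (hident p).variance_eq]
  rw [variance_const_mul, hsum]
  rcases eq_or_ne (Fintype.card ι : ℝ) 0 with h | h
  · simp [h]
  · field_simp

lemma integral_sq_sampleMean_sub [IsProbabilityMeasure μ] [Nonempty ι] {Y : ι → Ω → ℝ}
    {Y₀ : Ω → ℝ} (hY : ∀ p, MemLp (Y p) 2 μ)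
    (hindep : Pairwise fun p q => IndepFun (Y p) (Y q) μ)
    (hident : ∀ p, IdentDistrib (Y p) Y₀ μ μ) :
    ∫ ω, ((Fintype.card ι : ℝ)⁻¹ * ∑ p, Y p ω - μ[Y₀]) ^ 2 ∂μ
      = Var[Y₀; μ] / Fintype.card ι := by
  have hmean : μ[fun ω => (Fintype.card ι : ℝ)⁻¹ * ∑ p, Y p ω] = μ[Y₀] := by
    rw [integral_const_mul, integral_finsetSum _ fun p _ => (hY p).integrable one_le_two]
    simp [fun p => (hident p).integral_eq]
  rw [← variance_sampleMean hY hindep hident, variance_eq_integral, hmean]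
  exact (Finset.aemeasurable_fun_sum _ fun p _ => (hY p).aemeasurable).const_mul _

variable {κ : Type*} [Fintype κ]

lemma integrable_and_integral_sum_sq_sampleMean_sub [IsProbabilityMeasure μ] [Nonempty ι]
    {Y : ι → Ω → κ → ℝ} {Y₀ : Ω → κ → ℝ} (hY₀ : ∀ a, MemLp (fun ω => Y₀ ω a) 2 μ)
    (hindep : Pairwise fun p q => IndepFun (Y p) (Y q) μ)
    (hident : ∀ p, IdentDistrib (Y p) Y₀ μ μ) :
    Integrable
      (fun ω => ∑ a, ((Fintype.card ι : ℝ)⁻¹ * ∑ p, Y p ω a - ∫ ω, Y₀ ω a ∂μ) ^ 2) μ ∧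
    ∫ ω, ∑ a, ((Fintype.card ι : ℝ)⁻¹ * ∑ p, Y p ω a - ∫ ω, Y₀ ω a ∂μ) ^ 2 ∂μ
      = (∑ a, Var[fun ω => Y₀ ω a; μ]) / Fintype.card ι := by
  have hident_apply (a : κ) (p : ι) :
      IdentDistrib (fun ω => Y p ω a) (fun ω => Y₀ ω a) μ μ :=
    (hident p).comp (measurable_pi_apply a)
  have hY (a : κ) (p : ι) : MemLp (fun ω => Y p ω a) 2 μ :=
    (hident_apply a p).memLp_iff.2 (hY₀ a)
  have hindep_apply (a : κ) :
      Pairwise fun p q => IndepFun (fun ω => Y p ω a) (fun ω => Y q ω a) μ :=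
    fun p q hpq => (hindep hpq).comp (measurable_pi_apply a) (measurable_pi_apply a)
  have hsq (a : κ) : Integrable
      (fun ω => ((Fintype.card ι : ℝ)⁻¹ * ∑ p, Y p ω a - ∫ ω, Y₀ ω a ∂μ) ^ 2) μ :=
    (((memLp_finsetSum _ fun p _ => hY a p).const_mul _).sub (memLp_const _)).integrable_sq
  refine ⟨integrable_finsetSum _ fun a _ => hsq a, ?_⟩
  rw [integral_finsetSum _ fun a _ => hsq a, Finset.sum_div]
  exact Finset.sum_congr rfl fun a _ =>
    integral_sq_sampleMean_sub (hY a) (hindep_apply a) (hident_apply a)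

end SampleMean

section Eigenvectors

variable {κ : Type*} [Fintype κ]

lemma sum_sq_dotProduct_of_orthonormal [DecidableEq κ] {u : κ → κ → ℝ}
    (hu : ∀ k l, u k ⬝ᵥ u l = if k = l then 1 else 0) (v : κ → ℝ) :
    ∑ j, (v ⬝ᵥ u j) ^ 2 = v ⬝ᵥ v := by
  set U : Matrix κ κ ℝ := Matrix.of u
  have hUU : Uᵀ * U = 1 := mul_eq_one_comm.1 <| by
    ext k l
    simpa [U, Matrix.mul_apply, Matrix.one_apply, dotProduct] using hu k l
  have hUv : ∀ j, v ⬝ᵥ u j = (U *ᵥ v) j := fun j => dotProduct_comm _ _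
  calc ∑ j, (v ⬝ᵥ u j) ^ 2 = (U *ᵥ v) ⬝ᵥ (U *ᵥ v) := by simp only [hUv, sq]; rfl
    _ = v ⬝ᵥ (Uᵀ *ᵥ (U *ᵥ v)) := by rw [dotProduct_mulVec v Uᵀ, vecMul_transpose]
    _ = v ⬝ᵥ v := by rw [mulVec_mulVec, hUU, one_mulVec]

lemma lt_sum_sq_dotProduct_filter_of_orthonormal [DecidableEq κ] {u : κ → κ → ℝ}
    (hu : ∀ k l, u k ⬝ᵥ u l = if k = l then 1 else 0) {v : κ → ℝ} (hv : v ⬝ᵥ v = 1)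
    {P Q : κ → Prop} [DecidablePred P] [DecidablePred Q] (hPQ : ∀ j, Q j ↔ ¬ P j) {t : ℝ}
    (h : ∑ j ∈ univ.filter P, (v ⬝ᵥ u j) ^ 2 < 1 - t) :
    t < ∑ j ∈ univ.filter Q, (v ⬝ᵥ u j) ^ 2 := by
  have hsplit := sum_filter_add_sum_filter_not univ P fun j => (v ⬝ᵥ u j) ^ 2
  rw [sum_sq_dotProduct_of_orthonormal hu, hv, filter_congr fun j _ => (hPQ j).symm] at hsplit
  linarith

lemma dotProduct_sub_mulVec_of_eigen {A B : Matrix κ κ ℝ} (hA : A.IsSymm) {v w : κ → ℝ}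
    {c b : ℝ} (hv : A *ᵥ v = c • v) (hw : B *ᵥ w = b • w) :
    v ⬝ᵥ ((A - B) *ᵥ w) = (c - b) * (v ⬝ᵥ w) := by
  rw [sub_mulVec, dotProduct_sub, dotProduct_mulVec, ← mulVec_transpose, hA.eq, hv, hw,
    smul_dotProduct, dotProduct_smul, smul_eq_mul, smul_eq_mul, sub_mul]

lemma sq_sub_lt_four_mul_sq_sub_of_sign {a b c : ℝ} (hab : a ≠ b)
    (h : Real.sign (a - b) * (2 * c) > Real.sign (a - b) * (a + b)) :
    (a - b) ^ 2 < 4 * (c - b) ^ 2 := by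
  rcases hab.lt_or_gt with hlt | hgt
  · rw [Real.sign_of_neg (sub_neg.2 hlt)] at h
    nlinarith
  · rw [Real.sign_of_pos (sub_pos.2 hgt)] at h
    nlinarith

lemma sq_dotProduct_le_of_sign_gap {A B : Matrix κ κ ℝ} (hA : A.IsSymm) {v w : κ → ℝ}
    {a b c : ℝ} (hv : A *ᵥ v = c • v) (hvv : v ⬝ᵥ v = 1) (hw : B *ᵥ w = b • w)
    (hab : a ≠ b)
    (hsign : Real.sign (a - b) * (2 * c) > Real.sign (a - b) * (a + b)) :
    (v ⬝ᵥ w) ^ 2 ≤ 4 / (a - b) ^ 2 * ∑ z, ((A - B) *ᵥ w) z ^ 2 := by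
  have hcs : ((c - b) * (v ⬝ᵥ w)) ^ 2 ≤ ∑ z, ((A - B) *ᵥ w) z ^ 2 := by
    have hv1 : ∑ z, v z ^ 2 = 1 := by simpa [dotProduct, sq] using hvv
    have := sum_mul_sq_le_sq_mul_sq univ v ((A - B) *ᵥ w)
    rw [hv1, one_mul] at this
    rwa [← dotProduct_sub_mulVec_of_eigen hA hv hw]
  have hgap := sq_sub_lt_four_mul_sq_sub_of_sign hab hsign
  rw [div_mul_eq_mul_div, le_div_iff₀ (by positivity [sub_ne_zero.2 hab])]
  nlinarith [sq_nonneg (v ⬝ᵥ w)]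

end Eigenvectors

section SampleCovariance

variable {ι κ : Type*} [Fintype ι]

noncomputable def sampleCov (x : ι → κ → ℝ) : Matrix κ κ ℝ :=
  (Fintype.card ι : ℝ)⁻¹ • ∑ p, vecMulVec (x p) (x p)

lemma sampleCov_isSymm (x : ι → κ → ℝ) : (sampleCov x).IsSymm := by
  simp [sampleCov, Matrix.IsSymm, transpose_sum]

variable [Fintype κ]

lemma sampleCov_mulVec_apply (x : ι → κ → ℝ) (w : κ → ℝ) (a : κ) :
    (sampleCov x *ᵥ w) a
      = (Fintype.card ι : ℝ)⁻¹ * ∑ p, (vecMulVec (x p) (x p) *ᵥ w) a := by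
  simp [sampleCov, smul_mulVec, sum_mulVec]

lemma sq_vecMulVec_self_mulVec_apply_le (v w : κ → ℝ) (a : κ) :
    ((vecMulVec v v *ᵥ w) a) ^ 2 ≤ (∑ b, v b ^ 2) ^ 2 * ∑ b, w b ^ 2 := by
  have hva : v a ^ 2 ≤ ∑ b, v b ^ 2 :=
    single_le_sum (fun b _ => sq_nonneg (v b)) (mem_univ a)
  have hcs : (v ⬝ᵥ w) ^ 2 ≤ (∑ b, v b ^ 2) * ∑ b, w b ^ 2 :=
    sum_mul_sq_le_sq_mul_sq univ v w
  calc ((vecMulVec v v *ᵥ w) a) ^ 2 = v a ^ 2 * (v ⬝ᵥ w) ^ 2 := by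
        rw [vecMulVec_mulVec]; simp [mul_pow]
    _ ≤ (∑ b, v b ^ 2) * ((∑ b, v b ^ 2) * ∑ b, w b ^ 2) :=
        mul_le_mul hva hcs (sq_nonneg _) (sum_nonneg fun b _ => sq_nonneg (v b))
    _ = (∑ b, v b ^ 2) ^ 2 * ∑ b, w b ^ 2 := by ring

lemma abs_mul_le_sum_sq (v : κ → ℝ) (a b : κ) : |v a * v b| ≤ ∑ c, v c ^ 2 := by
  have hle (c : κ) : v c ^ 2 ≤ ∑ c, v c ^ 2 :=
    single_le_sum (fun c _ => sq_nonneg (v c)) (mem_univ c)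
  rw [abs_mul]
  nlinarith [hle a, hle b, sq_abs (v a), sq_abs (v b), abs_nonneg (v a), abs_nonneg (v b),
    sq_nonneg (|v a| - |v b|)]

variable {Ω : Type*} [MeasurableSpace Ω] {μ : Measure Ω} [IsProbabilityMeasure μ]

lemma integral_vecMulVec_self_mulVec_apply {X : Ω → κ → ℝ} (hX : AEMeasurable X μ)
    {C : Matrix κ κ ℝ} (hC : ∀ a b, C a b = ∫ ω, X ω a * X ω b ∂μ)
    (hL4 : Integrable (fun ω => (∑ a, X ω a ^ 2) ^ 2) μ) (w : κ → ℝ) (a : κ) :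
    ∫ ω, (vecMulVec (X ω) (X ω) *ᵥ w) a ∂μ = (C *ᵥ w) a := by
  have hnorm : Integrable (fun ω => ∑ c, X ω c ^ 2) μ :=
    ((memLp_two_iff_integrable_sq (by fun_prop)).2 hL4).integrable one_le_two
  have hint (b : κ) : Integrable (fun ω => X ω a * X ω b) μ :=
    hnorm.mono' (by fun_prop) (ae_of_all _ fun ω => abs_mul_le_sum_sq (X ω) a b)
  simp only [mulVec, dotProduct, vecMulVec_apply]
  rw [integral_finsetSum _ fun b _ => (hint b).mul_const _]
  simp [integral_mul_const, hC]

lemma integrable_and_integral_sum_sq_sampleCov_sub_mulVec [Nonempty ι] {x : ι → Ω → κ → ℝ}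
    {X₀ : Ω → κ → ℝ} (hindep : iIndepFun x μ) (hident : ∀ p, IdentDistrib (x p) X₀ μ μ)
    {C : Matrix κ κ ℝ} (hC : ∀ a b, C a b = ∫ ω, X₀ ω a * X₀ ω b ∂μ)
    (hL4 : Integrable (fun ω => (∑ a, X₀ ω a ^ 2) ^ 2) μ) (w : κ → ℝ) :
    Integrable (fun ω => ∑ a, ((sampleCov (fun p => x p ω) - C) *ᵥ w) a ^ 2) μ ∧
    ∫ ω, ∑ a, ((sampleCov (fun p => x p ω) - C) *ᵥ w) a ^ 2 ∂μ
      = (∫ ω, ∑ a, (vecMulVec (X₀ ω) (X₀ ω) *ᵥ w) a ^ 2 ∂μ - ∑ a, (C *ᵥ w) a ^ 2)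
        / Fintype.card ι := by
  obtain ⟨p₀⟩ := ‹Nonempty ι›
  have hX₀ : AEMeasurable X₀ μ := (hident p₀).aemeasurable_snd
  set φ : (κ → ℝ) → κ → ℝ := fun v => vecMulVec v v *ᵥ w
  have hφ : Measurable φ := by fun_prop
  have hY₀ (a : κ) : MemLp (fun ω => φ (X₀ ω) a) 2 μ := by
    refine (memLp_two_iff_integrable_sq (by fun_prop)).2 <|
      (hL4.mul_const (∑ b, w b ^ 2)).mono' (by fun_prop) (ae_of_all _ fun ω => ?_)
    rw [Real.norm_of_nonneg (sq_nonneg _)]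
    exact sq_vecMulVec_self_mulVec_apply_le (X₀ ω) w a
  have hmean (a : κ) : ∫ ω, φ (X₀ ω) a ∂μ = (C *ᵥ w) a :=
    integral_vecMulVec_self_mulVec_apply hX₀ hC hL4 w a
  have hcoord : (fun ω => ∑ a, ((sampleCov (fun p => x p ω) - C) *ᵥ w) a ^ 2) = fun ω =>
      ∑ a, ((Fintype.card ι : ℝ)⁻¹ * ∑ p, φ (x p ω) a - ∫ ω, φ (X₀ ω) a ∂μ) ^ 2 := by
    simp [sub_mulVec, sampleCov_mulVec_apply, hmean, φ]
  obtain ⟨hint, hval⟩ :=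
    integrable_and_integral_sum_sq_sampleMean_sub (Y := fun p ω => φ (x p ω)) hY₀
      (fun p q hpq => (hindep.indepFun hpq).comp hφ hφ) (fun p => (hident p).comp hφ)
  refine ⟨hcoord ▸ hint, ?_⟩
  rw [hcoord, hval]
  congr 1
  have hsq (a : κ) : Integrable (fun ω => φ (X₀ ω) a ^ 2) μ := (hY₀ a).integrable_sq
  simp only [variance_eq_sub (hY₀ _), sum_sub_distrib, hmean, Pi.pow_apply]
  rw [integral_finsetSum _ fun a _ => hsq a]

lemma integrable_and_integral_sum_sq_sampleCov_sub_mulVec_of_eigen [Nonempty ι]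
    {x : ι → Ω → κ → ℝ} {X₀ : Ω → κ → ℝ} (hindep : iIndepFun x μ)
    (hident : ∀ p, IdentDistrib (x p) X₀ μ μ)
    {C : Matrix κ κ ℝ} (hC : ∀ a b, C a b = ∫ ω, X₀ ω a * X₀ ω b ∂μ)
    (hL4 : Integrable (fun ω => (∑ a, X₀ ω a ^ 2) ^ 2) μ) {w : κ → ℝ} {c : ℝ}
    (hw : C *ᵥ w = c • w) (hw_norm : ∑ a, w a ^ 2 = 1) :
    Integrable (fun ω => ∑ a, ((sampleCov (fun p => x p ω) - C) *ᵥ w) a ^ 2) μ ∧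
    ∫ ω, ∑ a, ((sampleCov (fun p => x p ω) - C) *ᵥ w) a ^ 2 ∂μ
      = √(∫ ω, ∑ a, (vecMulVec (X₀ ω) (X₀ ω) *ᵥ w) a ^ 2 ∂μ - c ^ 2) ^ 2
        / Fintype.card ι := by
  obtain ⟨hint, hval⟩ := integrable_and_integral_sum_sq_sampleCov_sub_mulVec hindep hident hC hL4 w
  have hCw : ∑ a, (C *ᵥ w) a ^ 2 = c ^ 2 := by simp [hw, mul_pow, ← mul_sum, hw_norm]
  rw [hCw] at hval
  have hnonneg : 0 ≤ _ / (Fintype.card ι : ℝ) :=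
    hval ▸ integral_nonneg fun ω => sum_nonneg fun a _ => sq_nonneg _
  rw [Real.sq_sqrt (sub_nonneg.2 (by simpa using (le_div_iff₀ (by positivity)).1 hnonneg))]
  exact ⟨hint, hval⟩

end SampleCovariance

lemma measureReal_le_sum_integral_div {Ω ι : Type*} [MeasurableSpace Ω] {μ : Measure Ω}
    [IsFiniteMeasure μ] {S : Finset ι} {f : ι → Ω → ℝ} (hf : ∀ j ∈ S, Integrable (f j) μ)
    (hf_nonneg : ∀ j ∈ S, 0 ≤ f j) {s : Set Ω} {t : ℝ} (ht : 0 < t)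
    (hs : s ⊆ {ω | t ≤ ∑ j ∈ S, f j ω}) :
    μ.real s ≤ (∑ j ∈ S, ∫ ω, f j ω ∂μ) / t := by
  rw [le_div_iff₀ ht, mul_comm, ← integral_finsetSum _ hf]
  refine (mul_le_mul_of_nonneg_left (measureReal_mono hs) ht.le).trans ?_
  exact mul_meas_ge_le_integral_of_nonneg
    (ae_of_all _ fun ω => sum_nonneg fun j hj => hf_nonneg j hj ω) (integrable_finsetSum _ hf) t

theorem principal_component_localization_general {Ω : Type*} [MeasurableSpace Ω]
    (μ : Measure Ω) [IsProbabilityMeasure μ]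
    {n m : ℕ} (hm : 0 < m)
    (x : Fin m → Ω → Fin n → ℝ)
    (hindep : iIndepFun x μ)
    (hident : ∀ p, IdentDistrib (x p) (x ⟨0, hm⟩) μ μ)
    (C : Matrix (Fin n) (Fin n) ℝ)
    (hC : ∀ a b, C a b = ∫ ω, x ⟨0, hm⟩ ω a * x ⟨0, hm⟩ ω b ∂μ)
    (hL4 : Integrable (fun ω => (∑ a, x ⟨0, hm⟩ ω a ^ 2) ^ 2) μ)
    (Chat : Ω → Matrix (Fin n) (Fin n) ℝ)
    (hChat : ∀ ω, Chat ω = (m : ℝ)⁻¹ • ∑ p, vecMulVec (x p ω) (x p ω))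
    (u : Fin n → Fin n → ℝ) (lam : Fin n → ℝ)
    (huortho : ∀ k l, ∑ a, u k a * u l a = if k = l then 1 else 0)
    (hueig : ∀ k, C.mulVec (u k) = lam k • u k)
    (uhat : Fin n → Ω → Fin n → ℝ) (lamhat : Fin n → Ω → ℝ)
    (huhatortho : ∀ ω k l, ∑ a, uhat k ω a * uhat l ω a = if k = l then 1 else 0)
    (huhateig : ∀ ω k, (Chat ω).mulVec (uhat k ω) = lamhat k ω • uhat k ω)
    (i : Fin n) (ℓ : ℕ)
    (hsep : ∀ j : Fin n, (ℓ : ℤ) < |(j : ℤ) - (i : ℤ)| → lam j ≠ lam i)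
    (k : Fin n → ℝ)
    (hk : ∀ j, k j = Real.sqrt
      ((∫ ω, ∑ a, ((vecMulVec (x ⟨0, hm⟩ ω) (x ⟨0, hm⟩ ω)).mulVec (u j) a) ^ 2 ∂μ)
        - lam j ^ 2))
    (t : ℝ) (ht0 : 0 < t) :
    (μ {ω | (∀ j : Fin n, (ℓ : ℤ) < |(j : ℤ) - (i : ℤ)| →
              Real.sign (lam i - lam j) * (2 * lamhat i ω)
                > Real.sign (lam i - lam j) * (lam i + lam j))
            ∧ ∑ j ∈ Finset.univ.filter (fun j : Fin n => |(j : ℤ) - (i : ℤ)| ≤ (ℓ : ℤ)),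
                (∑ a, uhat i ω a * u j a) ^ 2 < 1 - t}).toReal
      ≤ ∑ j ∈ Finset.univ.filter (fun j : Fin n => (ℓ : ℤ) < |(j : ℤ) - (i : ℤ)|),
          4 * k j ^ 2 / (m * t * (lam i - lam j) ^ 2) := by
  have : Nonempty (Fin m) := ⟨⟨0, hm⟩⟩
  set far := univ.filter fun j : Fin n => (ℓ : ℤ) < |(j : ℤ) - (i : ℤ)|
  obtain rfl : Chat = fun ω => sampleCov fun p => x p ω := funext fun ω => by
    simp [hChat ω, sampleCov]
  have hunit (ω : Ω) : uhat i ω ⬝ᵥ uhat i ω = 1 := (huhatortho ω i i).trans (if_pos rfl)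
  set err : Fin n → Ω → ℝ := fun j ω =>
    ∑ a, (((sampleCov fun p => x p ω) - C) *ᵥ u j) a ^ 2
  have herr (j : Fin n) : Integrable (err j) μ ∧ ∫ ω, err j ω ∂μ = k j ^ 2 / m := by
    simpa [hk j] using integrable_and_integral_sum_sq_sampleCov_sub_mulVec_of_eigen hindep
      hident hC hL4 (hueig j) (by simpa [sq] using huortho j j)
  calc _ ≤ (∑ j ∈ far, ∫ ω, 4 / (lam i - lam j) ^ 2 * err j ω ∂μ) / t := by
        refine measureReal_le_sum_integral_div (fun j _ => (herr j).1.const_mul _)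
          (fun j _ ω => mul_nonneg (by positivity) (sum_nonneg fun a _ => sq_nonneg _)) ht0 ?_
        rintro ω ⟨hsign, hnear⟩
        refine (lt_sum_sq_dotProduct_filter_of_orthonormal huortho (hunit ω)
          (fun j => not_le.symm) hnear).le.trans (sum_le_sum fun j hj => ?_)
        have hj := (mem_filter.1 hj).2
        exact sq_dotProduct_le_of_sign_gap (sampleCov_isSymm _) (huhateig ω i) (hunit ω)
          (hueig j) (hsep j hj).symm (hsign j hj)
    _ = _ := by
        rw [sum_div]
        refine sum_congr rfl fun j _ => ?_
        rw [integral_const_mul, (herr j).2]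
        field_simp

/-- (Principal-component localization, eq. (14) of the paper.) In the
i.i.d. setting with positive definite covariance `C`, orthonormal eigenpairs `(u, λ)`
of `C` (nonincreasing, positive) and measurable eigenpairs `(û(ω), λ̂(ω))` of the
sample covariance `Ĉ(ω)` (nonincreasing): for a fixed index `i`, slack `ℓ ≥ 0`,
`S = {j : |j - i| > ℓ}` with `λ_j ≠ λ_i` for `j ∈ S`, and the event `E` that the sign
condition holds for every `j ∈ S`, for every `t ∈ (0, 1)`:
`P(E ∩ {∑_{|j-i| ≤ ℓ} ⟨û_i, u_j⟩² < 1 - t}) ≤ ∑_{j ∈ S} 4 k_j² / (m t (λ_i - λ_j)²)`. -/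
theorem principal_component_localization {Ω : Type*} [MeasurableSpace Ω]
    (μ : Measure Ω) [IsProbabilityMeasure μ]
    {n m : ℕ} (hm : 0 < m)
    (x : Fin m → Ω → Fin n → ℝ)
    (hmeas : ∀ p, Measurable (x p))
    (hindep : iIndepFun x μ)
    (hident : ∀ p, IdentDistrib (x p) (x ⟨0, hm⟩) μ μ)
    (hmean : ∀ a, ∫ ω, x ⟨0, hm⟩ ω a ∂μ = 0)
    (C : Matrix (Fin n) (Fin n) ℝ) (hCpos : C.PosDef)
    (hC : ∀ a b, C a b = ∫ ω, x ⟨0, hm⟩ ω a * x ⟨0, hm⟩ ω b ∂μ)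
    (hL4 : Integrable (fun ω => (∑ a, x ⟨0, hm⟩ ω a ^ 2) ^ 2) μ)
    (Chat : Ω → Matrix (Fin n) (Fin n) ℝ)
    (hChat : ∀ ω, Chat ω = (m : ℝ)⁻¹ • ∑ p, vecMulVec (x p ω) (x p ω))
    (u : Fin n → Fin n → ℝ) (lam : Fin n → ℝ)
    (hlam : Antitone lam) (hlampos : ∀ k, 0 < lam k)
    (huortho : ∀ k l, ∑ a, u k a * u l a = if k = l then 1 else 0)
    (hueig : ∀ k, C.mulVec (u k) = lam k • u k)
    (uhat : Fin n → Ω → Fin n → ℝ) (lamhat : Fin n → Ω → ℝ)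
    (huhatmeas : ∀ k, Measurable (uhat k))
    (hlamhatmeas : ∀ k, Measurable (lamhat k))
    (huhatortho : ∀ ω k l, ∑ a, uhat k ω a * uhat l ω a = if k = l then 1 else 0)
    (huhateig : ∀ ω k, (Chat ω).mulVec (uhat k ω) = lamhat k ω • uhat k ω)
    (hlamhatmono : ∀ ω, Antitone (fun k => lamhat k ω))
    (i : Fin n) (ℓ : ℕ)
    (hsep : ∀ j : Fin n, (ℓ : ℤ) < |(j : ℤ) - (i : ℤ)| → lam j ≠ lam i)
    (k : Fin n → ℝ)
    (hk : ∀ j, k j = Real.sqrt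
      ((∫ ω, ∑ a, ((vecMulVec (x ⟨0, hm⟩ ω) (x ⟨0, hm⟩ ω)).mulVec (u j) a) ^ 2 ∂μ)
        - lam j ^ 2))
    (t : ℝ) (ht0 : 0 < t) (ht1 : t < 1) :
    (μ {ω | (∀ j : Fin n, (ℓ : ℤ) < |(j : ℤ) - (i : ℤ)| →
              Real.sign (lam i - lam j) * (2 * lamhat i ω)
                > Real.sign (lam i - lam j) * (lam i + lam j))
            ∧ ∑ j ∈ Finset.univ.filter (fun j : Fin n => |(j : ℤ) - (i : ℤ)| ≤ (ℓ : ℤ)),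
                (∑ a, uhat i ω a * u j a) ^ 2 < 1 - t}).toReal
      ≤ ∑ j ∈ Finset.univ.filter (fun j : Fin n => (ℓ : ℤ) < |(j : ℤ) - (i : ℤ)|),
          4 * k j ^ 2 / (m * t * (lam i - lam j) ^ 2) :=
  principal_component_localization_general μ hm x hindep hident C hC hL4 Chat hChat u lam huortho
    hueig uhat lamhat huhatortho huhateig i ℓ hsep k hk t ht0
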